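/- Let G_n consist of the center p of a unit circle C and the m = n−1 vertices of a regular m-gon inscribed in C, with m ≥ 3. Then any closed disk whose interior contains no point of G_n and whose boundary passes through at least one vertex of the m-gon can have at most two vertices of the m-gon on its boundary, and if it has two, they are consecutive vertices. -/

import Mathlib

open Real

/-- The `i`-th vertex of a regular `m`-gon inscribed in the circle of center
`c` and radius `R`. -/
noncomputable def polygonVertex (c : EuclideanSpace ℝ (Fin 2)) (R : ℝ) (m : ℕ)
    (i : Fin m) : EuclideanSpace ℝ (Fin 2) :=
  let v : EuclideanSpace ℝ (Fin 2) := WithLp.toLp 2 ![cos (2 * π * i / m), sin (2 * π * i / m)]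
  c + R • v

/-! Put `w = o - p` and let `u k` be the unit vector from `p` to the `k`-th vertex. Since
`dist (p + u k) o ^ 2 = 1 - 2 ⟪w, u k⟫ + ‖w‖ ^ 2`, emptiness of the disk says
`⟪w, u k⟫ ≤ c := (1 + ‖w‖ ^ 2 - r ^ 2) / 2` for every `k`, with equality exactly for the vertices
on its boundary, and `c ≥ 1 / 2` because `p` is not inside the disk.

Three boundary vertices would force the boundary circle to be `C`, since two distinct circles in
the plane meet in at most two points; but `p` is inside `C`. For two boundary vertices `a < b`
that are not consecutive, take the shorter arc between them. Then `u a + u b` and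
`u (a + 1) + u (b - 1)` are `2 cos (π (b - a) / m)` and `2 cos (π (b - a - 2) / m)` times
the same unit vector. The second factor is strictly larger and the first is `≥ 0`, so
`⟪w, u (a + 1)⟫ + ⟪w, u (b - 1)⟫ > 2 c`, which is impossible. -/

open scoped InnerProductSpace

theorem dist_add_sq {E : Type*} [NormedAddCommGroup E] [InnerProductSpace ℝ E] (p o u : E) :
    dist (p + u) o ^ 2 = ‖u‖ ^ 2 - 2 * ⟪o - p, u⟫_ℝ + dist p o ^ 2 := by
  rw [dist_eq_norm, dist_comm, dist_eq_norm, real_inner_comm, ← norm_sub_sq_real]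
  congr 2
  abel

noncomputable def circlePoint (θ : ℝ) : EuclideanSpace ℝ (Fin 2) :=
  WithLp.toLp 2 ![cos θ, sin θ]

theorem norm_circlePoint (θ : ℝ) : ‖circlePoint θ‖ = 1 := by
  rw [EuclideanSpace.norm_eq, Fin.sum_univ_two]
  simp [circlePoint]

theorem circlePoint_sub_add_circlePoint_add (σ x : ℝ) :
    circlePoint (σ - x) + circlePoint (σ + x) = (2 * cos x) • circlePoint σ := by
  ext i
  fin_cases i <;>
    simp only [circlePoint, cos_sub, sin_sub, cos_add, sin_add, PiLp.add_apply, PiLp.smul_apply,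
      smul_eq_mul, Fin.zero_eta, Fin.mk_one, Fin.isValue, Matrix.cons_val_zero,
      Matrix.cons_val_one, Matrix.cons_val_fin_one] <;>
    ring

theorem cos_sub_eq_one_of_circlePoint_eq {θ φ : ℝ} (h : circlePoint θ = circlePoint φ) :
    cos (θ - φ) = 1 := by
  have hcos : cos θ = cos φ := congrArg (· 0) h
  have hsin : sin θ = sin φ := congrArg (· 1) h
  rw [cos_sub, hcos, hsin, ← sq, ← sq, cos_sq_add_sin_sq]

theorem circlePoint_two_pi_mul_mod_div (k m : ℕ) :
    circlePoint (2 * π * (k % m : ℕ) / m) = circlePoint (2 * π * k / m) := by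
  rcases Nat.eq_zero_or_pos m with rfl | hm
  · simp
  have hangle : 2 * π * k / m = 2 * π * (k % m : ℕ) / m + (k / m : ℕ) * (2 * π) := by
    conv_lhs => rw [← Nat.mod_add_div k m]
    push_cast
    field_simp
  simp only [hangle, circlePoint, cos_add_nat_mul_two_pi, sin_add_nat_mul_two_pi]

theorem polygonVertex_eq (c : EuclideanSpace ℝ (Fin 2)) (R : ℝ) (m : ℕ) (i : Fin m) :
    polygonVertex c R m i = c + R • circlePoint (2 * π * i / m) :=
  rfl

theorem dist_polygonVertex_center (c : EuclideanSpace ℝ (Fin 2)) (R : ℝ) (m : ℕ) (i : Fin m) :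
    dist (polygonVertex c R m i) c = |R| := by
  rw [polygonVertex_eq, dist_eq_norm, add_sub_cancel_left, norm_smul, norm_circlePoint,
    mul_one, Real.norm_eq_abs]

theorem polygonVertex_injective (c : EuclideanSpace ℝ (Fin 2)) {R : ℝ} (hR : R ≠ 0) (m : ℕ) :
    Function.Injective (polygonVertex c R m) := by
  intro i j h
  rw [polygonVertex_eq, polygonVertex_eq, add_right_inj, smul_right_inj hR] at h
  obtain ⟨n, hn⟩ := (cos_eq_one_iff _).1 (cos_sub_eq_one_of_circlePoint_eq h)
  have hm : (m : ℝ) ≠ 0 := by exact_mod_cast (Fin.pos i).ne'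
  have hnm : (n * m : ℤ) = (i : ℤ) - j := by
    rw [← sub_div, ← mul_sub, eq_div_iff hm] at hn
    have hreal : (n : ℝ) * m = (i : ℝ) - j :=
      mul_left_cancel₀ two_pi_pos.ne' (by linear_combination hn)
    exact_mod_cast hreal
  have := Int.eq_zero_of_abs_lt_dvd ⟨n, by rw [← hnm, mul_comm]⟩
    (abs_sub_lt_iff.2 ⟨by omega, by omega⟩)
  exact Fin.ext (by omega)

theorem two_mul_lt_inner_circlePoint_add {w : EuclideanSpace ℝ (Fin 2)} {σ x y c : ℝ}
    (hc : 0 < c) (hy : 0 ≤ y) (hyx : y < x) (hx : x ≤ π / 2)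
    (h₁ : ⟪w, circlePoint (σ - x)⟫_ℝ = c) (h₂ : ⟪w, circlePoint (σ + x)⟫_ℝ = c) :
    2 * c < ⟪w, circlePoint (σ - y)⟫_ℝ + ⟪w, circlePoint (σ + y)⟫_ℝ := by
  have hsum (t : ℝ) : ⟪w, circlePoint (σ - t)⟫_ℝ + ⟪w, circlePoint (σ + t)⟫_ℝ
      = 2 * cos t * ⟪w, circlePoint σ⟫_ℝ := by
    rw [← inner_add_right, circlePoint_sub_add_circlePoint_add, real_inner_smul_right]
  have hcx : 2 * cos x * ⟪w, circlePoint σ⟫_ℝ = 2 * c := by rw [← hsum, h₁, h₂, two_mul]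
  have hcos_nonneg : 0 ≤ cos x := cos_nonneg_of_neg_pi_div_two_le_of_le (by linarith) hx
  have hcos_lt : cos x < cos y := cos_lt_cos_of_nonneg_of_le_pi hy (by linarith [pi_pos]) hyx
  have hcenter : 0 < ⟪w, circlePoint σ⟫_ℝ :=
    pos_of_mul_pos_right (by rw [hcx]; positivity) (by positivity)
  rw [hsum, ← hcx]
  gcongr

theorem eq_add_one_of_inner_circlePoint_eq_max {w : EuclideanSpace ℝ (Fin 2)} {c : ℝ} {m a b : ℕ}
    (hc : 0 < c) (hmax : ∀ k : ℕ, ⟪w, circlePoint (2 * π * k / m)⟫_ℝ ≤ c)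
    (hab : a < b) (hm : 2 * (b - a) ≤ m)
    (ha : ⟪w, circlePoint (2 * π * a / m)⟫_ℝ = c) (hb : ⟪w, circlePoint (2 * π * b / m)⟫_ℝ = c) :
    b = a + 1 := by
  by_contra hne
  have hgap : (a : ℝ) + 2 ≤ b := by exact_mod_cast (by omega : a + 2 ≤ b)
  have hmpos : (0 : ℝ) < m := by exact_mod_cast (by omega : 0 < m)
  have hmR : 2 * ((b : ℝ) - a) ≤ m := by
    rw [← Nat.cast_sub hab.le]; exact_mod_cast hm
  have hplus (k t : ℝ) (h : 2 * k = a + b + t) :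
      2 * π * k / m = π * (a + b) / m + π * t / m := by
    rw [← add_div]; congr 1; linear_combination π * h
  have hminus (k t : ℝ) (h : 2 * k = a + b - t) :
      2 * π * k / m = π * (a + b) / m - π * t / m := by
    rw [← sub_div]; congr 1; linear_combination π * h
  have hlo := hmax (a + 1)
  have hhi := hmax (b - 1)
  rw [hminus _ (b - a) (by ring)] at ha
  rw [hplus _ (b - a) (by ring)] at hb
  rw [hminus _ (b - a - 2) (by push_cast; ring)] at hlo
  rw [hplus _ (b - a - 2) (by rw [Nat.cast_sub (by omega)]; push_cast; ring)] at hhi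
  have hinner := two_mul_lt_inner_circlePoint_add (y := π * (b - a - 2) / m) hc
    (div_nonneg (mul_nonneg pi_pos.le (by linarith)) hmpos.le)
    (div_lt_div_of_pos_right (mul_lt_mul_of_pos_left (by linarith) pi_pos) hmpos)
    (by rw [div_le_div_iff₀ hmpos two_pos]; nlinarith [pi_pos]) ha hb
  linarith

theorem consecutive_of_inner_circlePoint_eq_max {w : EuclideanSpace ℝ (Fin 2)} {c : ℝ} {m : ℕ}
    (hc : 0 < c) (hmax : ∀ k : Fin m, ⟪w, circlePoint (2 * π * k / m)⟫_ℝ ≤ c) {i j : Fin m}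
    (hij : i ≠ j) (hi : ⟪w, circlePoint (2 * π * i / m)⟫_ℝ = c)
    (hj : ⟪w, circlePoint (2 * π * j / m)⟫_ℝ = c) :
    (j : ℕ) = (i + 1) % m ∨ (i : ℕ) = (j + 1) % m := by
  have hmax' (k : ℕ) : ⟪w, circlePoint (2 * π * k / m)⟫_ℝ ≤ c := by
    rw [← circlePoint_two_pi_mul_mod_div]
    exact hmax ⟨k % m, Nat.mod_lt _ i.pos⟩
  wlog hlt : i < j generalizing i j
  · exact (this hij.symm hj hi (lt_of_le_of_ne (not_lt.1 hlt) hij.symm)).symm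
  have hlt' : (i : ℕ) < j := hlt
  have hjm := j.isLt
  by_cases hshort : 2 * (j - i : ℕ) ≤ m
  · left
    rw [Nat.mod_eq_of_lt (by omega)]
    exact eq_add_one_of_inner_circlePoint_eq_max hc hmax' hlt' hshort hi hj
  · right
    have hwrap : ⟪w, circlePoint (2 * π * (i + m : ℕ) / m)⟫_ℝ = c := by
      rw [← circlePoint_two_pi_mul_mod_div, Nat.add_mod_right, Nat.mod_eq_of_lt i.isLt, hi]
    have hsucc := eq_add_one_of_inner_circlePoint_eq_max (a := j) (b := i + m) hc hmax'
      (by omega) (by omega) hj hwrap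
    rw [show (j : ℕ) + 1 = m by omega, Nat.mod_self]
    omega

theorem gadget_empty_disk_vertices_general (m : ℕ) (p : EuclideanSpace ℝ (Fin 2))
    (o : EuclideanSpace ℝ (Fin 2)) (r : ℝ) (hr : 0 < r)
    (hempty_p : p ∉ Metric.ball o r)
    (hempty_v : ∀ i : Fin m, polygonVertex p 1 m i ∉ Metric.ball o r) :
    (¬ ∃ i j k : Fin m, i ≠ j ∧ j ≠ k ∧ i ≠ k ∧
        polygonVertex p 1 m i ∈ Metric.sphere o r ∧
        polygonVertex p 1 m j ∈ Metric.sphere o r ∧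
        polygonVertex p 1 m k ∈ Metric.sphere o r) ∧
    (∀ i j : Fin m, i ≠ j →
      polygonVertex p 1 m i ∈ Metric.sphere o r →
      polygonVertex p 1 m j ∈ Metric.sphere o r →
      (j : ℕ) = ((i : ℕ) + 1) % m ∨ (i : ℕ) = ((j : ℕ) + 1) % m) := by
  set c := (1 + dist p o ^ 2 - r ^ 2) / 2 with hc_def
  have hsq (i : Fin m) : dist (polygonVertex p 1 m i) o ^ 2
      = 1 - 2 * ⟪o - p, circlePoint (2 * π * i / m)⟫_ℝ + dist p o ^ 2 := by
    rw [polygonVertex_eq, one_smul, dist_add_sq, norm_circlePoint, one_pow]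
  have hlevel (i : Fin m) (hi : polygonVertex p 1 m i ∈ Metric.sphere o r) :
      ⟪o - p, circlePoint (2 * π * i / m)⟫_ℝ = c := by
    have hdist := hsq i
    rw [Metric.mem_sphere.1 hi] at hdist
    linarith
  have hmax (i : Fin m) : ⟪o - p, circlePoint (2 * π * i / m)⟫_ℝ ≤ c := by
    linarith [hc_def, hsq i, pow_le_pow_left₀ hr.le (not_lt.1 (hempty_v i)) 2]
  have hc : 0 < c := by
    linarith [hc_def, pow_le_pow_left₀ hr.le (not_lt.1 hempty_p) 2]
  refine ⟨?_, fun i j hij hi hj ↦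
    consecutive_of_inner_circlePoint_eq_max hc hmax hij (hlevel i hi) (hlevel j hj)⟩
  rintro ⟨i, j, k, hij, hjk, hik, hi, hj, hk⟩
  have hinj := polygonVertex_injective p one_ne_zero m
  have hC (l : Fin m) : polygonVertex p 1 m l ∈ (⟨p, 1⟩ : EuclideanGeometry.Sphere _) := by
    rw [EuclideanGeometry.mem_sphere, dist_polygonVertex_center, abs_one]
  have hne : (⟨o, r⟩ : EuclideanGeometry.Sphere _) ≠ ⟨p, 1⟩ := by
    intro h
    obtain ⟨rfl, rfl⟩ := EuclideanGeometry.Sphere.mk.inj h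
    exact hempty_p (Metric.mem_ball_self one_pos)
  rcases EuclideanGeometry.eq_of_mem_sphere_of_mem_sphere_of_finrank_eq_two
      finrank_euclideanSpace_fin hne (hinj.ne hij) hi hj hk (hC i) (hC j) (hC k) with h | h
  exacts [hik (hinj h).symm, hjk (hinj h).symm]

/-- In the `n`-gadget (center `p` of a unit circle together with the `m = n−1`
vertices of an inscribed regular `m`-gon, `m ≥ 3`), any closed disk whose
interior misses all gadget points and whose boundary passes through at least
one vertex has at most two vertices on its boundary, and if two, they are
consecutive. -/
theorem gadget_empty_disk_vertices (n : ℕ) (m : ℕ) (hm : m = n - 1)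
    (hm3 : 3 ≤ m) (p : EuclideanSpace ℝ (Fin 2))
    (o : EuclideanSpace ℝ (Fin 2)) (r : ℝ) (hr : 0 < r)
    (hempty_p : p ∉ Metric.ball o r)
    (hempty_v : ∀ i : Fin m, polygonVertex p 1 m i ∉ Metric.ball o r)
    (hsupp : ∃ i : Fin m, polygonVertex p 1 m i ∈ Metric.sphere o r) :
    (¬ ∃ i j k : Fin m, i ≠ j ∧ j ≠ k ∧ i ≠ k ∧
        polygonVertex p 1 m i ∈ Metric.sphere o r ∧
        polygonVertex p 1 m j ∈ Metric.sphere o r ∧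
        polygonVertex p 1 m k ∈ Metric.sphere o r) ∧
    (∀ i j : Fin m, i ≠ j →
      polygonVertex p 1 m i ∈ Metric.sphere o r →
      polygonVertex p 1 m j ∈ Metric.sphere o r →
      (j : ℕ) = ((i : ℕ) + 1) % m ∨ (i : ℕ) = ((j : ℕ) + 1) % m) :=
  gadget_empty_disk_vertices_general m p o r hr hempty_p hempty_v
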